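/- (Theorem 1, uniqueness of decomposition.) Suppose G_{z₁}(φ₁,g₁) · … · G_{z_η}(φ_η,g_η) = G_{z'₁}(φ'₁,g'₁) · … · G_{z'_{η'}}(φ'_{η'},g'_{η'}), where in each product all z's lie in Ξ, all (φ_ι,g_ι) and (φ'_ι,g'_ι) are nontrivial (not both components zero) with φ's in Φ and g's in the corresponding Δ_z, and consecutive subscripts differ (z_ι ≠ z_{ι+1} and z'_ι ≠ z'_{ι+1}). Then η = η', and z_ι = z'_ι, φ_ι = φ'_ι, g_ι = g'_ι for all ι = 1,…,η. In particular, no nonempty such alternating product of nontrivial factors equals the identity matrix I. -/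

import Mathlib

open Polynomial Matrix

noncomputable section

/-- The matrix `D = diag(-1,1,...,1)` of size `ν × ν` with `ν = n + 2`. -/
def Dm (n : ℕ) : Matrix (Fin (n + 2)) (Fin (n + 2)) ℂ :=
  Matrix.diagonal fun i => if i = 0 then -1 else 1

/-- Coefficientwise complex conjugation of a scalar polynomial (`ω` treated as real). -/
def cstar (p : ℂ[X]) : ℂ[X] := p.map (starRingEnd ℂ)

/-- Polynomial matrices of size `(n+2) × (n+2)`. -/
abbrev PM (n : ℕ) := Matrix (Fin (n + 2)) (Fin (n + 2)) ℂ[X]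

/-- `U(ω)* = Σ Uι* ωⁱ` : coefficientwise conjugate transpose of a polynomial matrix. -/
def Mstar (n : ℕ) (U : PM n) : PM n := Matrix.of fun i j => cstar (U j i)

/-- The scalar polynomial `g(ω)* h(ω)` for vector polynomials `g, h`. -/
def pdot (n : ℕ) (g h : Fin (n + 2) → ℂ[X]) : ℂ[X] := ∑ i, cstar (g i) * h i

/-- `Ξ = {z : z₁ = 1, z* D z = 0}`. -/
def Xi (n : ℕ) : Set (Fin (n + 2) → ℂ) :=
  {z | z 0 = 1 ∧ star z ⬝ᵥ (Dm n).mulVec z = 0}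

/-- `Δ_z⁰ = {d : d* z = d* D z = 0}`. -/
def Delta0 (n : ℕ) (z : Fin (n + 2) → ℂ) : Set (Fin (n + 2) → ℂ) :=
  {d | star d ⬝ᵥ z = 0 ∧ star d ⬝ᵥ (Dm n).mulVec z = 0}

/-- `Φ = {φ : φ(0) = 0, φ* = -φ}`. -/
def Phi : Set ℂ[X] := {φ | φ.eval 0 = 0 ∧ cstar φ = -φ}

/-- `Δ_z` : vector polynomials vanishing at 0 with all coefficient vectors in `Δ_z⁰`. -/
def DeltaZ (n : ℕ) (z : Fin (n + 2) → ℂ) : Set (Fin (n + 2) → ℂ[X]) :=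
  {g | (∀ i, (g i).eval 0 = 0) ∧ ∀ k : ℕ, (fun i => (g i).coeff k) ∈ Delta0 n z}

/-- `G_z(φ,g) = D·[z(φ - (1/2)g*g)z* + (zg* - gz*)] + I`. -/
def Gmat (n : ℕ) (z : Fin (n + 2) → ℂ) (φ : ℂ[X]) (g : Fin (n + 2) → ℂ[X]) : PM n :=
  (Dm n).map Polynomial.C *
      Matrix.of (fun i j =>
        Polynomial.C (z i) * (φ - Polynomial.C (1 / 2 : ℂ) * pdot n g g) *
            Polynomial.C (star (z j)) +
          (Polynomial.C (z i) * cstar (g j) - g i * Polynomial.C (star (z j)))) +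
    1

/-- `M` : the group of polynomial matrices with `U(ω) D U(ω)* = D`. -/
def MM (n : ℕ) : Set (PM n) :=
  {U | U * (Dm n).map Polynomial.C * Mstar n U = (Dm n).map Polynomial.C}

/-- `M₀ = {U ∈ M : U(0) = I}`. -/
def M0 (n : ℕ) : Set (PM n) :=
  {U | U ∈ MM n ∧ U.map (fun p => p.eval 0) = 1}

/-- `M_z = {G_z(φ,g) : φ ∈ Φ, g ∈ Δ_z}`. -/
def Mz (n : ℕ) (z : Fin (n + 2) → ℂ) : Set (PM n) :=
  {U | ∃ φ ∈ Phi, ∃ g ∈ DeltaZ n z, U = Gmat n z φ g}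

/-- `Ψ_z = {G_z(φ,0) : φ ∈ Φ}`. -/
def Psi (n : ℕ) (z : Fin (n + 2) → ℂ) : Set (PM n) :=
  {U | ∃ φ ∈ Phi, U = Gmat n z φ 0}

/-- Degree of a polynomial matrix: the largest `ι` with a nonzero coefficient `ω^ι`. -/
def degPM (n : ℕ) (U : PM n) : ℕ :=
  Finset.univ.sup fun p : Fin (n + 2) × Fin (n + 2) => (U p.1 p.2).natDegree

/-!
Each nontrivial factor `G_z(φ,g)` has top coefficient `c · D z z*` with `c ≠ 0`, because the scalar
part `φ - (1/2) g*g` strictly dominates `g` in degree. For distinct `z, w ∈ Ξ` one has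
`z* D w ≠ 0`: otherwise `z - w` would be `D`-isotropic with vanishing first entry, hence zero.
So along an alternating product the top coefficients multiply to a nonzero multiple of
`D z₁ z_η*`; in particular the product is not `I` and it determines `z₁`. Cancelling the first
factors with the group law of `M_z` and inducting on the length gives uniqueness.
-/

open scoped ComplexOrder

section Basics

variable {n : ℕ}

@[simp] lemma cstar_add (p q : ℂ[X]) : cstar (p + q) = cstar p + cstar q := Polynomial.map_add _
@[simp] lemma cstar_mul (p q : ℂ[X]) : cstar (p * q) = cstar p * cstar q := Polynomial.map_mul _
@[simp] lemma cstar_neg (p : ℂ[X]) : cstar (-p) = -cstar p := Polynomial.map_neg _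
@[simp] lemma cstar_sub (p q : ℂ[X]) : cstar (p - q) = cstar p - cstar q := Polynomial.map_sub _
@[simp] lemma cstar_zero : cstar 0 = 0 := Polynomial.map_zero _
@[simp] lemma cstar_C (a : ℂ) : cstar (C a) = C (star a) := Polynomial.map_C _
@[simp] lemma coeff_cstar (p : ℂ[X]) (k : ℕ) : (cstar p).coeff k = star (p.coeff k) :=
  Polynomial.coeff_map _ _
@[simp] lemma natDegree_cstar (p : ℂ[X]) : (cstar p).natDegree = p.natDegree :=
  natDegree_map_eq_of_injective (RingHom.injective _) _
@[simp] lemma cstar_cstar (p : ℂ[X]) : cstar (cstar p) = p := by ext; simp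

lemma cstar_pdot (g h : Fin (n + 2) → ℂ[X]) : cstar (pdot n g h) = pdot n h g := by
  rw [pdot, cstar, Polynomial.map_sum]
  exact Finset.sum_congr rfl fun i _ => by rw [← cstar, cstar_mul, cstar_cstar, mul_comm]

lemma pdot_add_left (g g' h : Fin (n + 2) → ℂ[X]) :
    pdot n (g + g') h = pdot n g h + pdot n g' h := by
  simp [pdot, add_mul, Finset.sum_add_distrib]

lemma pdot_add_right (g h h' : Fin (n + 2) → ℂ[X]) :
    pdot n g (h + h') = pdot n g h + pdot n g h' := by
  simp [pdot, mul_add, Finset.sum_add_distrib]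

lemma pdot_neg_left (g h : Fin (n + 2) → ℂ[X]) : pdot n (-g) h = -pdot n g h := by
  simp [pdot]

lemma pdot_neg_right (g h : Fin (n + 2) → ℂ[X]) : pdot n g (-h) = -pdot n g h := by
  simp [pdot]

@[simp] lemma pdot_zero_left (h : Fin (n + 2) → ℂ[X]) : pdot n 0 h = 0 := by
  simp [pdot]

lemma eval_zero_pdot (g h : Fin (n + 2) → ℂ[X]) :
    (pdot n g h).eval 0 = ∑ i, star ((g i).eval 0) * (h i).eval 0 := by
  simp [pdot, eval_finsetSum, cstar, eval_zero_map]

lemma coeff_pdot_self_of_natDegree_le {g : Fin (n + 2) → ℂ[X]} {m : ℕ}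
    (hg : ∀ i, (g i).natDegree ≤ m) :
    (pdot n g g).coeff (m + m) = star (fun i => (g i).coeff m) ⬝ᵥ fun i => (g i).coeff m := by
  simp only [pdot, finsetSum_coeff, dotProduct, Pi.star_apply]
  refine Finset.sum_congr rfl fun i _ => ?_
  rw [coeff_mul_add_eq_of_natDegree_le ((natDegree_cstar _).le.trans (hg i)) (hg i),
    coeff_cstar]

lemma Dm_apply_self_of_ne {i : Fin (n + 2)} (hi : i ≠ 0) : Dm n i i = 1 := by
  simp [Dm, hi]

@[simp] lemma Dm_apply_zero_self : Dm n 0 0 = -1 := by simp [Dm]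

@[simp] lemma star_Dm_apply_self (i : Fin (n + 2)) : star (Dm n i i) = Dm n i i := by
  by_cases hi : i = 0 <;> simp [Dm, hi]

lemma Dm_apply_self_ne_zero (i : Fin (n + 2)) : Dm n i i ≠ 0 := by
  by_cases hi : i = 0 <;> simp [Dm, hi]

lemma Dm_mulVec_apply (v : Fin (n + 2) → ℂ) (i : Fin (n + 2)) :
    (Dm n *ᵥ v) i = Dm n i i * v i := by
  simp [Dm, mulVec_diagonal]

lemma Dm_map_C_mul_apply (M : PM n) (i j : Fin (n + 2)) :
    ((Dm n).map C * M) i j = C (Dm n i i) * M i j := by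
  simp [Dm, diagonal_map, diagonal_mul]

lemma star_dotProduct_Dm_mulVec_comm (v w : Fin (n + 2) → ℂ) :
    star w ⬝ᵥ Dm n *ᵥ v = star (star v ⬝ᵥ Dm n *ᵥ w) := by
  simp [dotProduct, Dm_mulVec_apply, mul_comm, mul_assoc]

end Basics

section Geometry

variable {n : ℕ}

lemma Dm_mulVec_of_apply_zero {u : Fin (n + 2) → ℂ} (hu : u 0 = 0) : Dm n *ᵥ u = u := by
  ext i
  by_cases hi : i = 0
  · simp [Dm_mulVec_apply, hi, hu]
  · simp [Dm_mulVec_apply, Dm_apply_self_of_ne hi]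

lemma star_dotProduct_Dm_mulVec_ne_zero {z w : Fin (n + 2) → ℂ} (hz : z ∈ Xi n)
    (hw : w ∈ Xi n) (hne : z ≠ w) : star z ⬝ᵥ Dm n *ᵥ w ≠ 0 := by
  intro hzw
  have hwz : star w ⬝ᵥ Dm n *ᵥ z = 0 := by rw [star_dotProduct_Dm_mulVec_comm, hzw, star_zero]
  have hu : (z - w) 0 = 0 := by simp [hz.1, hw.1]
  -- `z - w` is D-isotropic, and `D` is the identity on vectors with vanishing first entry
  have : star (z - w) ⬝ᵥ (z - w) = 0 :=
    calc star (z - w) ⬝ᵥ (z - w) = star (z - w) ⬝ᵥ Dm n *ᵥ (z - w) := by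
          rw [Dm_mulVec_of_apply_zero hu]
      _ = 0 := by
          rw [mulVec_sub, star_sub, dotProduct_sub, sub_dotProduct, sub_dotProduct, hz.2, hw.2,
            hzw, hwz, sub_self]
  exact hne (sub_eq_zero.mp (dotProduct_star_self_eq_zero.mp this))

lemma apply_zero_of_mem_Delta0 {z d : Fin (n + 2) → ℂ} (hz : z ∈ Xi n) (hd : d ∈ Delta0 n z) :
    d 0 = 0 := by
  have key : star d ⬝ᵥ z - star d ⬝ᵥ Dm n *ᵥ z = 2 * star (d 0) := by
    rw [← dotProduct_sub, dotProduct, Finset.sum_eq_single 0]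
    · simp [Dm_mulVec_apply, hz.1]; ring
    · intro k _ hk
      simp [Dm_mulVec_apply, Dm_apply_self_of_ne hk]
    · simp
  rw [hd.1, hd.2, sub_zero, eq_comm, mul_eq_zero, star_eq_zero] at key
  exact key.resolve_left two_ne_zero

lemma apply_zero_of_mem_DeltaZ {z : Fin (n + 2) → ℂ} {g : Fin (n + 2) → ℂ[X]} (hz : z ∈ Xi n)
    (hg : g ∈ DeltaZ n z) : g 0 = 0 := by
  ext k
  exact apply_zero_of_mem_Delta0 hz (hg.2 k)

end Geometry

section Closure

variable {n : ℕ}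

lemma neg_mem_Delta0 {z d : Fin (n + 2) → ℂ} (hd : d ∈ Delta0 n z) : -d ∈ Delta0 n z := by
  simp_all [Delta0]

lemma add_mem_Delta0 {z d e : Fin (n + 2) → ℂ} (hd : d ∈ Delta0 n z) (he : e ∈ Delta0 n z) :
    d + e ∈ Delta0 n z := by
  simp_all [Delta0, add_dotProduct]

lemma neg_mem_DeltaZ {z : Fin (n + 2) → ℂ} {g : Fin (n + 2) → ℂ[X]} (hg : g ∈ DeltaZ n z) :
    -g ∈ DeltaZ n z :=
  ⟨fun i => by simp [hg.1 i], fun k => by simpa [Pi.neg_def] using neg_mem_Delta0 (hg.2 k)⟩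

lemma add_mem_DeltaZ {z : Fin (n + 2) → ℂ} {g h : Fin (n + 2) → ℂ[X]} (hg : g ∈ DeltaZ n z)
    (hh : h ∈ DeltaZ n z) : g + h ∈ DeltaZ n z :=
  ⟨fun i => by simp [hg.1 i, hh.1 i],
    fun k => by simpa [Pi.add_def] using add_mem_Delta0 (hg.2 k) (hh.2 k)⟩

lemma neg_mem_Phi {φ : ℂ[X]} (hφ : φ ∈ Phi) : -φ ∈ Phi :=
  ⟨by simp [hφ.1], by rw [cstar_neg, hφ.2]⟩

lemma add_mem_Phi {φ ψ : ℂ[X]} (hφ : φ ∈ Phi) (hψ : ψ ∈ Phi) : φ + ψ ∈ Phi :=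
  ⟨by simp [hφ.1, hψ.1], by rw [cstar_add, hφ.2, hψ.2, neg_add]⟩

lemma half_pdot_sub_mem_Phi {g h : Fin (n + 2) → ℂ[X]} (hg : ∀ i, (g i).eval 0 = 0) :
    C (1 / 2) * (pdot n h g - pdot n g h) ∈ Phi := by
  refine ⟨by simp [eval_zero_pdot, hg], ?_⟩
  have : star (1 / 2 : ℂ) = 1 / 2 := by simp
  rw [cstar_mul, cstar_sub, cstar_pdot, cstar_pdot, cstar_C, this]
  ring

end Closure

section GroupLaw

variable {n : ℕ}

def pdotD (n : ℕ) (a b : Fin (n + 2) → ℂ[X]) : ℂ[X] := ∑ k, cstar (a k) * C (Dm n k k) * b k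

lemma cstar_pdotD (a b : Fin (n + 2) → ℂ[X]) : cstar (pdotD n a b) = pdotD n b a := by
  rw [pdotD, cstar, Polynomial.map_sum]
  exact Finset.sum_congr rfl fun k _ => by
    rw [← cstar, cstar_mul, cstar_mul, cstar_cstar, cstar_C, star_Dm_apply_self]; ring

lemma coeff_pdotD_C_right (a : Fin (n + 2) → ℂ[X]) (z : Fin (n + 2) → ℂ) (k : ℕ) :
    (pdotD n a fun i => C (z i)).coeff k = star (fun i => (a i).coeff k) ⬝ᵥ Dm n *ᵥ z := by
  simp only [pdotD, finsetSum_coeff, dotProduct, Dm_mulVec_apply, coeff_mul_C, coeff_cstar,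
    Pi.star_apply]
  simp [mul_assoc]

lemma pdotD_C_C_eq_zero {z : Fin (n + 2) → ℂ} (hz : z ∈ Xi n) :
    pdotD n (fun i => C (z i)) (fun i => C (z i)) = 0 := by
  ext k
  rw [coeff_pdotD_C_right, coeff_zero]
  rcases k with _ | k
  · simpa using hz.2
  · simp [coeff_C_succ, ← Pi.zero_def]

lemma pdotD_C_right_eq_zero {z : Fin (n + 2) → ℂ} {g : Fin (n + 2) → ℂ[X]}
    (hg : g ∈ DeltaZ n z) : pdotD n g (fun i => C (z i)) = 0 := by
  ext k
  rw [coeff_pdotD_C_right, (hg.2 k).2, coeff_zero]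

lemma pdotD_C_left_eq_zero {z : Fin (n + 2) → ℂ} {g : Fin (n + 2) → ℂ[X]}
    (hg : g ∈ DeltaZ n z) : pdotD n (fun i => C (z i)) g = 0 := by
  rw [← cstar_pdotD, pdotD_C_right_eq_zero hg, cstar_zero]

lemma pdotD_eq_pdot {z : Fin (n + 2) → ℂ} {g : Fin (n + 2) → ℂ[X]} (hz : z ∈ Xi n)
    (hg : g ∈ DeltaZ n z) (h : Fin (n + 2) → ℂ[X]) : pdotD n g h = pdot n g h := by
  refine Finset.sum_congr rfl fun k _ => ?_
  by_cases hk : k = 0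
  · simp [hk, apply_zero_of_mem_DeltaZ hz hg]
  · simp [Dm_apply_self_of_ne hk]

/-- The bracket `z q z* + (z g* - g z*)` of `G_z`, with a free scalar part `q`. -/
def Gpart (n : ℕ) (z : Fin (n + 2) → ℂ) (q : ℂ[X]) (g : Fin (n + 2) → ℂ[X]) : PM n :=
  Matrix.of fun i j =>
    C (z i) * q * C (star (z j)) + (C (z i) * cstar (g j) - g i * C (star (z j)))

lemma Gmat_eq_Gpart (z : Fin (n + 2) → ℂ) (φ : ℂ[X]) (g : Fin (n + 2) → ℂ[X]) :
    Gmat n z φ g = (Dm n).map C * Gpart n z (φ - C (1 / 2) * pdot n g g) g + 1 := rfl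

lemma Gpart_add (z : Fin (n + 2) → ℂ) (q r : ℂ[X]) (g h : Fin (n + 2) → ℂ[X]) :
    Gpart n z q g + Gpart n z r h = Gpart n z (q + r) (g + h) := by
  ext i j : 1
  simp only [Gpart, Matrix.add_apply, of_apply, Pi.add_apply, cstar_add]
  ring

lemma Gpart_mul_Dm_mul_Gpart {z : Fin (n + 2) → ℂ} (hz : z ∈ Xi n) {g h : Fin (n + 2) → ℂ[X]}
    (hg : g ∈ DeltaZ n z) (hh : h ∈ DeltaZ n z) (q r : ℂ[X]) :
    Gpart n z q g * ((Dm n).map C * Gpart n z r h) = Gpart n z (-pdot n g h) 0 := by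
  ext i j : 1
  set Z : Fin (n + 2) → ℂ[X] := fun k => C (z k)
  -- each summand splits along the forms `Z* D Z`, `Z* D h`, `g* D Z`, `g* D h`;
  -- only the last one survives
  have expand : ∀ k, Gpart n z q g i k * ((Dm n).map C * Gpart n z r h) k j =
      (Z i * q - g i) * (r * C (star (z j)) + cstar (h j)) * (cstar (Z k) * C (Dm n k k) * Z k)
      - (Z i * q - g i) * C (star (z j)) * (cstar (Z k) * C (Dm n k k) * h k)
      + Z i * (r * C (star (z j)) + cstar (h j)) * (cstar (g k) * C (Dm n k k) * Z k)
      - Z i * C (star (z j)) * (cstar (g k) * C (Dm n k k) * h k) := by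
    intro k
    simp only [Dm_map_C_mul_apply, Gpart, of_apply, Z, cstar_C]
    ring
  rw [mul_apply, Finset.sum_congr rfl fun k _ => expand k]
  simp only [Finset.sum_add_distrib, Finset.sum_sub_distrib, ← Finset.mul_sum]
  rw [← pdotD, ← pdotD, ← pdotD, ← pdotD, pdotD_C_C_eq_zero hz, pdotD_C_left_eq_zero hh,
    pdotD_C_right_eq_zero hg, pdotD_eq_pdot hz hg]
  simp [Gpart, Z]
  ring

lemma Gmat_mul {z : Fin (n + 2) → ℂ} (hz : z ∈ Xi n) {g h : Fin (n + 2) → ℂ[X]}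
    (hg : g ∈ DeltaZ n z) (hh : h ∈ DeltaZ n z) (φ ψ : ℂ[X]) :
    Gmat n z φ g * Gmat n z ψ h =
      Gmat n z (φ + ψ + C (1 / 2) * (pdot n h g - pdot n g h)) (g + h) := by
  simp only [Gmat_eq_Gpart]
  set DC := (Dm n).map C
  have hDC : ∀ A B : PM n, (DC * A + 1) * (DC * B + 1) = DC * (A * (DC * B) + A + B) + 1 := by
    intro A B; noncomm_ring
  rw [hDC, Gpart_mul_Dm_mul_Gpart hz hg hh, Gpart_add, Gpart_add, zero_add]
  congr 3
  have h2 : C (1 / 2 : ℂ) * 2 = 1 := by rw [← C_ofNat, ← C_mul]; norm_num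
  rw [pdot_add_left, pdot_add_right, pdot_add_right]
  linear_combination pdot n g h * h2

@[simp] lemma Gmat_zero_zero (z : Fin (n + 2) → ℂ) : Gmat n z 0 0 = 1 := by
  have : Gpart n z (0 - C (1 / 2) * pdot n 0 0) 0 = 0 := by
    ext i j : 1
    simp [Gpart]
  rw [Gmat_eq_Gpart, this, Matrix.mul_zero, zero_add]

lemma Gmat_neg_mul_self {z : Fin (n + 2) → ℂ} (hz : z ∈ Xi n) {g : Fin (n + 2) → ℂ[X]}
    (hg : g ∈ DeltaZ n z) (φ : ℂ[X]) :
    Gmat n z (-φ) (-g) * Gmat n z φ g = 1 := by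
  simp [Gmat_mul hz (neg_mem_DeltaZ hg) hg, pdot_neg_left, pdot_neg_right]

end GroupLaw


section TopCoeff

variable {l m o R : Type*} [Semiring R]

def HasTopCoeff (U : Matrix l m R[X]) (N : ℕ) (M : Matrix l m R) : Prop :=
  (∀ i j, (U i j).natDegree ≤ N) ∧ ∀ i j, (U i j).coeff N = M i j

lemma HasTopCoeff.mul [Fintype m] {A : Matrix l m R[X]} {B : Matrix m o R[X]} {a b : ℕ}
    {M : Matrix l m R} {M' : Matrix m o R} (hA : HasTopCoeff A a M) (hB : HasTopCoeff B b M') :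
    HasTopCoeff (A * B) (a + b) (M * M') := by
  refine ⟨fun i j => ?_, fun i j => ?_⟩
  · exact natDegree_sum_le_of_forall_le _ _ fun k _ =>
      natDegree_mul_le.trans (add_le_add (hA.1 i k) (hB.1 k j))
  · simp only [mul_apply, finsetSum_coeff]
    exact Finset.sum_congr rfl fun k _ => by
      rw [coeff_mul_add_eq_of_natDegree_le (hA.1 i k) (hB.1 k j), hA.2, hB.2]

lemma HasTopCoeff.unique {U : Matrix l m R[X]} {N N' : ℕ} {M M' : Matrix l m R}
    (h : HasTopCoeff U N M) (h' : HasTopCoeff U N' M') (i : l) (j : m) (hM : M i j ≠ 0)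
    (hM' : M' i j ≠ 0) : N = N' ∧ M = M' := by
  have hN : N = N' := by
    apply le_antisymm
    · exact (le_natDegree_of_ne_zero (h.2 i j ▸ hM)).trans (h'.1 i j)
    · exact (le_natDegree_of_ne_zero (h'.2 i j ▸ hM')).trans (h.1 i j)
  subst hN
  exact ⟨rfl, Matrix.ext fun i j => (h.2 i j).symm.trans (h'.2 i j)⟩

end TopCoeff

section SingleFactor

variable {n : ℕ}

lemma coeff_ne_of_mem_Phi {φ : ℂ[X]} (hφ : φ ∈ Phi) {r : ℂ} (hr : star r = r) (hr0 : r ≠ 0)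
    (k : ℕ) : φ.coeff k ≠ r := by
  intro hk
  have := congrArg (fun p => p.coeff k) hφ.2
  simp only [coeff_cstar, coeff_neg, hk, hr] at this
  exact hr0 (CharZero.eq_neg_self_iff.mp this)

/-- For `g ≠ 0` of degree `m`, the coefficient of `ω^(2m)` is `φ_{2m} - (1/2)|lead g|²`, which
cannot vanish as `φ_{2m}` is purely imaginary. -/
lemma natDegree_lt_natDegree_sub_half_pdot_self {φ : ℂ[X]} {g : Fin (n + 2) → ℂ[X]}
    (hφ : φ ∈ Phi) (hg : ∀ i, (g i).eval 0 = 0) (hnt : ¬(φ = 0 ∧ g = 0)) (j : Fin (n + 2)) :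
    (g j).natDegree < (φ - C (1 / 2) * pdot n g g).natDegree := by
  by_cases hg0 : g = 0
  · subst hg0
    simpa using natDegree_pos_of_eval₂_root (fun h => hnt ⟨h, rfl⟩) (RingHom.id ℂ) hφ.1 fun _ => id
  set m := Finset.univ.sup fun i => (g i).natDegree
  have hle : ∀ i, (g i).natDegree ≤ m := fun i =>
    Finset.le_sup (f := fun i => (g i).natDegree) (Finset.mem_univ i)
  obtain ⟨j0, hj0⟩ : ∃ j, g j ≠ 0 := by
    by_contra! h
    exact hg0 (funext h)
  have hm : 0 < m :=
    (natDegree_pos_of_eval₂_root hj0 (RingHom.id ℂ) (hg j0) fun _ => id).trans_le (hle j0)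
  obtain ⟨i0, -, hi0⟩ := Finset.exists_mem_eq_sup Finset.univ Finset.univ_nonempty
    fun i => (g i).natDegree
  have hi0' : g i0 ≠ 0 := by
    rintro h
    rw [h, natDegree_zero] at hi0
    omega
  set c : Fin (n + 2) → ℂ := fun i => (g i).coeff m
  have hc : c ≠ 0 := fun hc =>
    hi0' (leadingCoeff_eq_zero.mp (by simpa [c, leadingCoeff, ← hi0] using congrFun hc i0))
  have hcoeff : (φ - C (1 / 2) * pdot n g g).coeff (m + m) ≠ 0 := by
    have hpc : (pdot n g g).coeff (m + m) = star c ⬝ᵥ c := coeff_pdot_self_of_natDegree_le hle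
    rw [coeff_sub, coeff_C_mul, hpc, sub_ne_zero]
    refine coeff_ne_of_mem_Phi hφ ?_ ?_ _
    · rw [star_mul', (star_dotProduct c c).symm]
      simp
    · exact mul_ne_zero (by norm_num) (dotProduct_star_self_eq_zero.not.mpr hc)
  exact (hle j).trans_lt ((Nat.lt_add_of_pos_right hm).trans_le (le_natDegree_of_ne_zero hcoeff))

lemma Gmat_hasTopCoeff {z : Fin (n + 2) → ℂ} {φ : ℂ[X]} {g : Fin (n + 2) → ℂ[X]}
    (hφ : φ ∈ Phi) (hg : ∀ i, (g i).eval 0 = 0) (hnt : ¬(φ = 0 ∧ g = 0)) :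
    ∃ (N : ℕ) (c : ℂ), 0 < N ∧ c ≠ 0 ∧
      HasTopCoeff (Gmat n z φ g) N (vecMulVec (Dm n *ᵥ z) (c • star z)) := by
  set q := φ - C (1 / 2) * pdot n g g
  have hlt := natDegree_lt_natDegree_sub_half_pdot_self hφ hg hnt
  have hN : 0 < q.natDegree := (Nat.zero_le _).trans_lt (hlt 0)
  have hq : q ≠ 0 := fun h => by simp [h] at hN
  have htop : ∀ k, q.natDegree ≤ k → ∀ i j, (Gmat n z φ g i j).coeff k =
      vecMulVec (Dm n *ᵥ z) (q.coeff k • star z) i j := by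
    intro k hk i j
    have hgk : ∀ i, (g i).coeff k = 0 := fun i =>
      coeff_eq_zero_of_natDegree_lt ((hlt i).trans_le hk)
    have hone : ((1 : PM n) i j).coeff k = 0 := by
      rw [one_apply]
      split_ifs <;> simp [coeff_one, (hN.trans_le hk).ne']
    simp [Gmat_eq_Gpart, Gpart, Dm_map_C_mul_apply, hone, hgk, vecMulVec_apply, Dm_mulVec_apply,
      q]
    ring
  refine ⟨q.natDegree, q.leadingCoeff, hN, leadingCoeff_ne_zero.mpr hq, fun i j => ?_,
    htop _ le_rfl⟩
  refine natDegree_le_iff_coeff_eq_zero.mpr fun k hk => ?_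
  rw [htop k hk.le, coeff_eq_zero_of_natDegree_lt hk]
  simp

end SingleFactor

structure Factor (n : ℕ) where
  z : Fin (n + 2) → ℂ
  φ : ℂ[X]
  g : Fin (n + 2) → ℂ[X]

namespace Factor

variable {n : ℕ}

def mat (x : Factor n) : PM n := Gmat n x.z x.φ x.g

def IsAdmissible (x : Factor n) : Prop :=
  x.z ∈ Xi n ∧ x.φ ∈ Phi ∧ x.g ∈ DeltaZ n x.z ∧ ¬(x.φ = 0 ∧ x.g = 0)

lemma IsAdmissible.hasTopCoeff {x : Factor n} (hx : x.IsAdmissible) :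
    ∃ (N : ℕ) (c : ℂ), 0 < N ∧ c ≠ 0 ∧
      HasTopCoeff x.mat N (vecMulVec (Dm n *ᵥ x.z) (c • star x.z)) :=
  Gmat_hasTopCoeff hx.2.1 hx.2.2.1.1 hx.2.2.2

end Factor

section Words

variable {n : ℕ}

def wordProd (L : List (Factor n)) : PM n := (L.map Factor.mat).prod

@[simp] lemma wordProd_nil : wordProd ([] : List (Factor n)) = 1 := rfl

@[simp] lemma wordProd_cons (x : Factor n) (L : List (Factor n)) :
    wordProd (x :: L) = x.mat * wordProd L := List.prod_cons

def IsReducedWord (L : List (Factor n)) : Prop :=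
  (∀ x ∈ L, x.IsAdmissible) ∧ L.IsChain fun a b => a.z ≠ b.z

lemma IsReducedWord.tail {x : Factor n} {L : List (Factor n)} (h : IsReducedWord (x :: L)) :
    IsReducedWord L :=
  ⟨fun y hy => h.1 y (List.mem_cons_of_mem x hy), h.2.tail⟩

lemma IsReducedWord.head {x : Factor n} {L : List (Factor n)} (h : IsReducedWord (x :: L)) :
    x.IsAdmissible :=
  h.1 x List.mem_cons_self

lemma vecMulVec_Dm_mulVec_apply_zero {x w : Fin (n + 2) → ℂ} (hw : w 0 = 1) (c : ℂ)
    (i : Fin (n + 2)) : vecMulVec (Dm n *ᵥ x) (c • star w) i 0 = Dm n i i * x i * c := by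
  simp [vecMulVec_apply, Dm_mulVec_apply, hw]

lemma IsReducedWord.hasTopCoeff {x : Factor n} {L : List (Factor n)}
    (h : IsReducedWord (x :: L)) :
    ∃ (N : ℕ) (c : ℂ) (w : Fin (n + 2) → ℂ), 0 < N ∧ c ≠ 0 ∧ w ∈ Xi n ∧
      HasTopCoeff (wordProd (x :: L)) N (vecMulVec (Dm n *ᵥ x.z) (c • star w)) := by
  induction L generalizing x with
  | nil =>
    obtain ⟨δ, a, hδ, ha, hx⟩ := h.head.hasTopCoeff
    exact ⟨δ, a, x.z, hδ, ha, h.head.1, by simpa using hx⟩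
  | cons y L ih =>
    obtain ⟨δ, a, hδ, ha, hx⟩ := h.head.hasTopCoeff
    obtain ⟨N, c, w, hN, hc, hw, hL⟩ := ih h.tail
    have hxy : star x.z ⬝ᵥ Dm n *ᵥ y.z ≠ 0 :=
      star_dotProduct_Dm_mulVec_ne_zero h.head.1 h.tail.head.1 (List.isChain_cons_cons.mp h.2).1
    refine ⟨δ + N, a * (star x.z ⬝ᵥ Dm n *ᵥ y.z) * c, w, by omega, by simp [ha, hc, hxy], hw, ?_⟩
    rw [wordProd_cons]
    convert hx.mul hL using 1
    rw [vecMulVec_mul_vecMulVec, smul_dotProduct, smul_smul, smul_eq_mul]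

lemma IsReducedWord.wordProd_ne_one {x : Factor n} {L : List (Factor n)}
    (h : IsReducedWord (x :: L)) : wordProd (x :: L) ≠ 1 := by
  obtain ⟨N, c, w, hN, hc, hw, hL⟩ := h.hasTopCoeff
  intro h1
  have h00 := hL.2 0 0
  rw [h1, vecMulVec_Dm_mulVec_apply_zero hw.1, one_apply_eq, coeff_one, if_neg hN.ne'] at h00
  simp [h.head.1.1, hc] at h00

lemma IsReducedWord.head_z_eq {x x' : Factor n} {L L' : List (Factor n)}
    (h : IsReducedWord (x :: L)) (h' : IsReducedWord (x' :: L'))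
    (heq : wordProd (x :: L) = wordProd (x' :: L')) : x.z = x'.z := by
  obtain ⟨N, c, w, -, hc, hw, hL⟩ := h.hasTopCoeff
  obtain ⟨N', c', w', -, hc', hw', hL'⟩ := h'.hasTopCoeff
  rw [heq] at hL
  obtain ⟨-, hM⟩ := hL.unique hL' 0 0
    (by simp [vecMulVec_Dm_mulVec_apply_zero hw.1, h.head.1.1, hc])
    (by simp [vecMulVec_Dm_mulVec_apply_zero hw'.1, h'.head.1.1, hc'])
  have hcol : ∀ i, Dm n i i * x.z i * c = Dm n i i * x'.z i * c' := fun i => by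
    rw [← vecMulVec_Dm_mulVec_apply_zero hw.1, ← vecMulVec_Dm_mulVec_apply_zero hw'.1, hM]
  have hcc : c = c' := by simpa [h.head.1.1, h'.head.1.1] using hcol 0
  subst hcc
  funext i
  exact mul_left_cancel₀ (Dm_apply_self_ne_zero i) (mul_right_cancel₀ hc (hcol i))

lemma IsReducedWord.wordProd_cons_ne {x y : Factor n} {L L' : List (Factor n)}
    (h : IsReducedWord (x :: L)) (h' : IsReducedWord (y :: L')) (hyx : y.z = x.z) :
    wordProd (y :: L') ≠ wordProd L := by
  cases L with
  | nil => exact h'.wordProd_ne_one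
  | cons u L =>
    intro heq
    exact (List.isChain_cons_cons.mp h.2).1 (hyx ▸ h'.head_z_eq h.tail heq)

end Words

section Uniqueness

variable {n : ℕ}

lemma IsReducedWord.cons_of_z_eq {x y : Factor n} {L : List (Factor n)}
    (h : IsReducedWord (x :: L)) (hy : y.IsAdmissible) (hyx : y.z = x.z) :
    IsReducedWord (y :: L) := by
  refine ⟨fun u hu => ?_, ?_⟩
  · rcases List.mem_cons.mp hu with rfl | hu
    exacts [hy, h.1 u (List.mem_cons_of_mem x hu)]
  · exact h.2.tail.cons fun u hu => hyx ▸ (List.isChain_cons.mp h.2).1 u hu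

theorem IsReducedWord.eq_of_wordProd_eq :
    ∀ {L L' : List (Factor n)}, IsReducedWord L → IsReducedWord L' →
      wordProd L = wordProd L' → L = L'
  | [], [], _, _, _ => rfl
  | [], _ :: _, _, h', heq => (h'.wordProd_ne_one heq.symm).elim
  | _ :: _, [], h, _, heq => (h.wordProd_ne_one heq).elim
  | ⟨z, φ, g⟩ :: L, ⟨z', φ', g'⟩ :: L', h, h', heq => by
    obtain rfl : z = z' := h.head_z_eq h' heq
    obtain ⟨hz, hφ, hg, -⟩ := h.head
    obtain ⟨-, hφ', hg', -⟩ := h'.head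
    -- `G_z(φ,g)⁻¹ G_z(φ',g')` is again a factor `G_z(ψ,k)`
    set ψ := -φ + φ' + C (1 / 2) * (pdot n g' (-g) - pdot n (-g) g')
    set k := -g + g'
    have hψk : Gmat n z ψ k * wordProd L' = wordProd L := by
      simp only [wordProd_cons, Factor.mat] at heq
      rw [← Gmat_mul hz (neg_mem_DeltaZ hg) hg', mul_assoc, ← heq, ← mul_assoc,
        Gmat_neg_mul_self hz hg, one_mul]
    by_cases htriv : ψ = 0 ∧ k = 0
    · obtain rfl : g = g' := neg_add_eq_zero.mp htriv.2
      obtain rfl : φ = φ' := by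
        have := htriv.1
        simp only [ψ, pdot_neg_left, pdot_neg_right] at this
        linear_combination -this
      rw [htriv.1, htriv.2, Gmat_zero_zero, one_mul] at hψk
      rw [eq_of_wordProd_eq h.tail h'.tail hψk.symm]
    · have hred : IsReducedWord (⟨z, ψ, k⟩ :: L') := h'.cons_of_z_eq
        ⟨hz, add_mem_Phi (add_mem_Phi (neg_mem_Phi hφ) hφ')
            (half_pdot_sub_mem_Phi (neg_mem_DeltaZ hg).1),
          add_mem_DeltaZ (neg_mem_DeltaZ hg) hg', htriv⟩ rfl
      exact (h.wordProd_cons_ne hred rfl (by rwa [wordProd_cons])).elim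

end Uniqueness

lemma wordProd_ofFn {n η : ℕ} (f : Fin η → Factor n) :
    wordProd (List.ofFn f) = (List.ofFn fun ι => (f ι).mat).prod := by
  rw [wordProd, List.map_ofFn]
  rfl

lemma isReducedWord_ofFn {n η : ℕ} {f : Fin η → Factor n} (hf : ∀ ι, (f ι).IsAdmissible)
    (halt : ∀ (i : ℕ) (h : i + 1 < η), (f ⟨i, Nat.lt_of_succ_lt h⟩).z ≠ (f ⟨i + 1, h⟩).z) :
    IsReducedWord (List.ofFn f) :=
  ⟨by simpa [List.mem_ofFn] using hf, List.isChain_ofFn.mpr halt⟩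

/-- Theorem 1, uniqueness of decomposition: two alternating products of
nontrivial factors coincide only if they have the same length and identical factors. -/
theorem stmt4 (n : ℕ) (η η' : ℕ)
    (z : Fin η → (Fin (n + 2) → ℂ)) (φ : Fin η → ℂ[X]) (g : Fin η → (Fin (n + 2) → ℂ[X]))
    (z' : Fin η' → (Fin (n + 2) → ℂ)) (φ' : Fin η' → ℂ[X])
    (g' : Fin η' → (Fin (n + 2) → ℂ[X]))
    (hz : ∀ ι, z ι ∈ Xi n) (hφ : ∀ ι, φ ι ∈ Phi) (hg : ∀ ι, g ι ∈ DeltaZ n (z ι))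
    (hz' : ∀ ι, z' ι ∈ Xi n) (hφ' : ∀ ι, φ' ι ∈ Phi) (hg' : ∀ ι, g' ι ∈ DeltaZ n (z' ι))
    (hnt : ∀ ι, ¬(φ ι = 0 ∧ g ι = 0)) (hnt' : ∀ ι, ¬(φ' ι = 0 ∧ g' ι = 0))
    (halt : ∀ (i : ℕ) (h : i + 1 < η), z ⟨i, by omega⟩ ≠ z ⟨i + 1, h⟩)
    (halt' : ∀ (i : ℕ) (h : i + 1 < η'), z' ⟨i, by omega⟩ ≠ z' ⟨i + 1, h⟩)
    (heq : (List.ofFn fun ι => Gmat n (z ι) (φ ι) (g ι)).prod =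
           (List.ofFn fun ι => Gmat n (z' ι) (φ' ι) (g' ι)).prod) :
    η = η' ∧
      ∀ (i : ℕ) (h : i < η) (h' : i < η'),
        z ⟨i, h⟩ = z' ⟨i, h'⟩ ∧ φ ⟨i, h⟩ = φ' ⟨i, h'⟩ ∧ g ⟨i, h⟩ = g' ⟨i, h'⟩ := by
  let f : Fin η → Factor n := fun ι => ⟨z ι, φ ι, g ι⟩
  let f' : Fin η' → Factor n := fun ι => ⟨z' ι, φ' ι, g' ι⟩
  have hL : List.ofFn f = List.ofFn f' :=
    (isReducedWord_ofFn (fun ι => ⟨hz ι, hφ ι, hg ι, hnt ι⟩) halt).eq_of_wordProd_eq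
      (isReducedWord_ofFn (fun ι => ⟨hz' ι, hφ' ι, hg' ι, hnt' ι⟩) halt')
      (by rw [wordProd_ofFn, wordProd_ofFn]; exact heq)
  obtain ⟨rfl, hff⟩ := Sigma.mk.inj_iff.mp (List.ofFn_inj'.mp hL)
  refine ⟨rfl, fun i h _ => ?_⟩
  simpa [f, f'] using congrFun (eq_of_heq hff) ⟨i, h⟩
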